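/- Let G = (V, E) be a graph with a linear order < on its edge set E. Then the map sending a triple (F, A_i, A_e) — where F = (V, A_f) is a spanning forest of G, A_i is a subset of the internally active edges of F, and A_e is a subset of the externally active edges of F — to the edge set (A_f \ A_i) ∪ A_e, is a bijection onto the power set 2^E of E. -/

import Mathlib

open Finset

attribute [local instance] Classical.propDecidable

/-- A multigraph on vertex type `V` with edge index type `E` is given by a map
`ends : E → Sym2 V` (loops and parallel edges are allowed).  For an edge subset
`A ⊆ E`, `edgeGraph ends A` is the simple graph on `V` whose adjacency is
witnessed by some edge of `A`; it determines the connected components of the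
spanning subgraph `(V, A)`. -/
def edgeGraph {V E : Type} (ends : E → Sym2 V) (A : Finset E) : SimpleGraph V where
  Adj a b := a ≠ b ∧ ∃ e ∈ A, ends e = s(a, b)
  symm := by
    refine ⟨?_⟩
    rintro a b ⟨hab, e, he, hs⟩
    exact ⟨Ne.symm hab, e, he, by rw [hs, Sym2.eq_swap]⟩
  loopless := by refine ⟨?_⟩; rintro a ⟨h, -⟩; exact h rfl

/-- `kc ends A` is the number of connected components of the spanning subgraph `(V, A)`. -/
noncomputable def kc {V E : Type} (ends : E → Sym2 V) (A : Finset E) : ℕ :=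
  Nat.card (edgeGraph ends A).ConnectedComponent

/-- `(V, A)` is a spanning forest of `(V, E)`: it is a forest
(`|A| + k((V,A)) = |V|`, which rules out loops, parallel edges and cycles)
with as many connected components as the whole graph. -/
def IsSpanningForest {V E : Type} [Fintype V] [Fintype E] (ends : E → Sym2 V)
    (A : Finset E) : Prop :=
  A.card + kc ends A = Fintype.card V ∧ kc ends A = kc ends Finset.univ

/-- `F - e + f`. -/
def swapEdge {E : Type} [DecidableEq E] (A : Finset E) (e f : E) : Finset E :=
  insert f (A.erase e)

/-- `e` is internally active in the spanning forest `(V, A)`. -/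
def InternallyActive {V E : Type} [Fintype V] [Fintype E] [DecidableEq E] [LinearOrder E]
    (ends : E → Sym2 V) (A : Finset E) (e : E) : Prop :=
  e ∈ A ∧ ¬ ∃ f, f ∉ A ∧ e < f ∧ IsSpanningForest ends (swapEdge A e f)

/-- `f` is externally active in the spanning forest `(V, A)`. -/
def ExternallyActive {V E : Type} [Fintype V] [Fintype E] [DecidableEq E] [LinearOrder E]
    (ends : E → Sym2 V) (A : Finset E) (f : E) : Prop :=
  f ∉ A ∧ ¬ ∃ e, e ∈ A ∧ f < e ∧ IsSpanningForest ends (swapEdge A e f)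

/-- The set `E_i(F)` of internally active edges of the spanning forest `F = (V, A)`. -/
noncomputable def intAct {V E : Type} [Fintype V] [Fintype E] [DecidableEq E] [LinearOrder E]
    (ends : E → Sym2 V) (A : Finset E) : Finset E :=
  Finset.univ.filter (InternallyActive ends A)

/-- The set `E_e(F)` of externally active edges of the spanning forest `F = (V, A)`. -/
noncomputable def extAct {V E : Type} [Fintype V] [Fintype E] [DecidableEq E] [LinearOrder E]
    (ends : E → Sym2 V) (A : Finset E) : Finset E :=
  Finset.univ.filter (ExternallyActive ends A)

/-!
Crapo's bijection. Fix `S ⊆ E` and decide the edges from the largest down: keep `e` iff it is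
not spanned by the edges kept above it together with the edges of `S` below it. This defines a
unique spanning forest `A`, and the exchange property of graph closure shows that every edge of
`A \ S` is internally active and every edge of `S \ A` externally active, so `(A, A \ S, S \ A)`
is a preimage of `S`. Conversely, for any admissible triple `(F, A_i, A_e)` the activity
conditions say precisely that `F` is the forest produced by this rule from `(F \ A_i) ∪ A_e`,
which gives injectivity.
-/

/-- The closure operator of the cycle matroid of the multigraph. -/
def edgeClosure {V E : Type} (ends : E → Sym2 V) (A : Finset E) : Set E :=
  {e | ∀ x y, ends e = s(x, y) → (edgeGraph ends A).Reachable x y}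

section Closure

variable {V E : Type} {ends : E → Sym2 V}

lemma edgeGraph_mono {A B : Finset E} (h : A ⊆ B) : edgeGraph ends A ≤ edgeGraph ends B :=
  fun _ _ ⟨hab, e, he, hs⟩ => ⟨hab, e, h he, hs⟩

lemma subset_edgeClosure (A : Finset E) : (A : Set E) ⊆ edgeClosure ends A := by
  intro e he x y hxy
  by_cases hxy' : x = y
  · exact hxy' ▸ .refl x
  · exact SimpleGraph.Adj.reachable ⟨hxy', e, he, hxy⟩

lemma edgeClosure_mono {A B : Finset E} (h : A ⊆ B) : edgeClosure ends A ⊆ edgeClosure ends B :=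
  fun _ he x y hxy => (he x y hxy).mono (edgeGraph_mono h)

lemma reachable_of_subset_edgeClosure {A B : Finset E} (h : (B : Set E) ⊆ edgeClosure ends A)
    {x y : V} (hr : (edgeGraph ends B).Reachable x y) : (edgeGraph ends A).Reachable x y := by
  rw [SimpleGraph.reachable_iff_reflTransGen] at hr ⊢
  refine Relation.reflTransGen_closed (fun a b hab => ?_) x y hr
  obtain ⟨-, e, he, hab⟩ := hab
  exact (SimpleGraph.reachable_iff_reflTransGen a b).1 (h he a b hab)

lemma edgeClosure_subset_edgeClosure_of_subset_edgeClosure {A B : Finset E}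
    (h : (B : Set E) ⊆ edgeClosure ends A) : edgeClosure ends B ⊆ edgeClosure ends A :=
  fun _ he x y hxy => reachable_of_subset_edgeClosure h (he x y hxy)

lemma notMem_edgeClosure_iff {A : Finset E} {e : E} :
    e ∉ edgeClosure ends A ↔ ∃ x y, ends e = s(x, y) ∧ ¬ (edgeGraph ends A).Reachable x y := by
  simp [edgeClosure]

variable [DecidableEq E]

lemma reachable_or_of_reachable_insert {A : Finset E} {f : E} {x y : V}
    (hr : (edgeGraph ends (insert f A)).Reachable x y) :
    (edgeGraph ends A).Reachable x y ∨ ∃ a ∈ ends f, ∃ b ∈ ends f,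
      (edgeGraph ends A).Reachable x a ∧ (edgeGraph ends A).Reachable b y := by
  rw [SimpleGraph.reachable_iff_reflTransGen] at hr
  induction hr with
  | refl => exact .inl .rfl
  | @tail b c _ hbc ih =>
    obtain ⟨hne, g, hg, hgbc⟩ := hbc
    rcases mem_insert.1 hg with rfl | hgA
    · have hb : b ∈ ends g := hgbc ▸ Sym2.mem_mk_left b c
      have hc : c ∈ ends g := hgbc ▸ Sym2.mem_mk_right b c
      rcases ih with hxb | ⟨a, ha, -, -, hxa, -⟩
      · exact .inr ⟨b, hb, c, hc, hxb, .rfl⟩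
      · exact .inr ⟨a, ha, c, hc, hxa, .rfl⟩
    · have hbc : (edgeGraph ends A).Reachable b c := SimpleGraph.Adj.reachable ⟨hne, g, hgA, hgbc⟩
      exact ih.imp (·.trans hbc) fun ⟨a, ha, d, hd, hxa, hdb⟩ => ⟨a, ha, d, hd, hxa, hdb.trans hbc⟩

lemma mem_edgeClosure_insert {A : Finset E} {e f : E} (he : e ∉ edgeClosure ends A)
    (hef : e ∈ edgeClosure ends (insert f A)) : f ∈ edgeClosure ends (insert e A) := by
  obtain ⟨x, y, hxy, hnr⟩ := notMem_edgeClosure_iff.1 he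
  have hmono : edgeGraph ends A ≤ edgeGraph ends (insert e A) := edgeGraph_mono (subset_insert e A)
  rcases reachable_or_of_reachable_insert (hef x y hxy) with h | ⟨a, ha, b, hb, hxa, hby⟩
  · exact absurd h hnr
  have hab : (edgeGraph ends (insert e A)).Reachable a b :=
    ((hxa.mono hmono).symm.trans (subset_edgeClosure _ (mem_insert_self e A) x y hxy)).trans
      (hby.mono hmono).symm
  intro u v huv
  rw [huv, Sym2.mem_iff] at ha hb
  rcases ha with rfl | rfl <;> rcases hb with rfl | rfl
  exacts [absurd (hxa.trans hby) hnr, hab, hab.symm, absurd (hxa.trans hby) hnr]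

end Closure

section Components

open SimpleGraph

variable {V E : Type} {ends : E → Sym2 V}

lemma kc_empty : kc ends ∅ = Nat.card V := by
  have hbot : edgeGraph ends ∅ = ⊥ := by ext; simp [edgeGraph]
  rw [kc, hbot]
  refine (Nat.card_congr (Equiv.ofBijective (⊥ : SimpleGraph V).connectedComponentMk
    ⟨fun x y hxy => ?_, ConnectedComponent.ind fun x => ⟨x, rfl⟩⟩)).symm
  exact reachable_bot.1 (ConnectedComponent.exact hxy)

variable [Finite V]

lemma kc_eq_kc_iff {A B : Finset E} (h : A ⊆ B) :
    kc ends A = kc ends B ↔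
      ∀ x y, (edgeGraph ends B).Reachable x y → (edgeGraph ends A).Reachable x y := by
  have hsurj := ConnectedComponent.surjective_map_ofLE (edgeGraph_mono (ends := ends) h)
  have hbij := Nat.bijective_iff_surjective_and_card (ConnectedComponent.map (Hom.ofLE
    (edgeGraph_mono (ends := ends) h)))
  rw [and_iff_right hsurj] at hbij
  rw [kc, kc, ← hbij, Function.Bijective, and_iff_left hsurj]
  refine ⟨fun hinj x y hr => ConnectedComponent.exact (hinj (ConnectedComponent.sound hr)),
    fun hreach => ConnectedComponent.ind₂ fun x y hxy => ?_⟩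
  exact ConnectedComponent.sound (hreach x y (ConnectedComponent.exact hxy))

variable [DecidableEq E]

lemma kc_insert_of_mem_edgeClosure {A : Finset E} {e : E} (h : e ∈ edgeClosure ends A) :
    kc ends (insert e A) = kc ends A := by
  refine ((kc_eq_kc_iff (subset_insert e A)).2 fun x y => reachable_of_subset_edgeClosure ?_).symm
  rw [coe_insert, Set.insert_subset_iff]
  exact ⟨h, subset_edgeClosure A⟩

lemma kc_insert_add_one_of_notMem_edgeClosure {A : Finset E} {e : E}
    (h : e ∉ edgeClosure ends A) : kc ends (insert e A) + 1 = kc ends A := by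
  obtain ⟨u, v, huv, hnr⟩ := notMem_edgeClosure_iff.1 h
  set G := edgeGraph ends A
  have hmono : G ≤ edgeGraph ends (insert e A) := edgeGraph_mono (subset_insert e A)
  -- the components of `A + e` are those of `A`, with the one of `u` merged into the one of `v`
  let π := ConnectedComponent.map (Hom.ofLE hmono)
  have hrange : π '' {G.connectedComponentMk u}ᶜ = Set.univ := by
    refine Set.eq_univ_of_forall (ConnectedComponent.ind fun x => ?_)
    by_cases hx : G.connectedComponentMk x = G.connectedComponentMk u
    · refine ⟨G.connectedComponentMk v, fun hvu => hnr (ConnectedComponent.exact hvu).symm, ?_⟩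
      exact ConnectedComponent.sound
        ((subset_edgeClosure _ (mem_insert_self e A) u v huv).symm.trans
          ((ConnectedComponent.exact hx).symm.mono hmono))
    · exact ⟨_, hx, rfl⟩
  have hinj : Set.InjOn π {G.connectedComponentMk u}ᶜ := by
    intro c hc d hd hcd
    induction c using ConnectedComponent.ind with | h x => ?_
    induction d using ConnectedComponent.ind with | h y => ?_
    refine ConnectedComponent.sound ?_
    rcases reachable_or_of_reachable_insert (ConnectedComponent.exact hcd) with
      hxy | ⟨a, ha, b, hb, hxa, hby⟩
    · exact hxy
    rw [huv, Sym2.mem_iff] at ha hb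
    rcases ha with rfl | rfl
    · exact absurd (ConnectedComponent.sound hxa) hc
    rcases hb with rfl | rfl
    · exact absurd (ConnectedComponent.sound hby.symm) hd
    exact hxa.trans hby
  rw [kc, kc, ← Set.ncard_univ, ← hrange, hinj.ncard_image, ← Set.ncard_add_ncard_compl
    {G.connectedComponentMk u}, Set.ncard_singleton, add_comm]

end Components

/-- `A` is independent in the cycle matroid: `(V, A)` has no loop, parallel pair or cycle. -/
def EdgeIndep {V E : Type} [DecidableEq E] (ends : E → Sym2 V) (A : Finset E) : Prop :=
  ∀ e ∈ A, e ∉ edgeClosure ends (A.erase e)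

lemma forall_mem_edgeClosure_iff_kc_eq {V E : Type} [Finite V] [Fintype E] {ends : E → Sym2 V}
    {A : Finset E} : (∀ e, e ∈ edgeClosure ends A) ↔ kc ends A = kc ends univ := by
  rw [kc_eq_kc_iff (subset_univ A)]
  exact ⟨fun h x y => reachable_of_subset_edgeClosure fun e _ => h e,
    fun h e x y hxy => h x y (subset_edgeClosure univ (mem_univ e) x y hxy)⟩

section Forest

variable {V E : Type} [DecidableEq E] {ends : E → Sym2 V}

lemma EdgeIndep.subset {A B : Finset E} (hB : EdgeIndep ends B) (h : A ⊆ B) : EdgeIndep ends A :=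
  fun e he hcl => hB e (h he) (edgeClosure_mono (erase_subset_erase e h) hcl)

lemma exists_circuit_of_mem_edgeClosure {A : Finset E} {x : E} (h : x ∈ edgeClosure ends A) :
    ∃ C ⊆ A, x ∈ edgeClosure ends C ∧ ∀ g ∈ C, g ∈ edgeClosure ends (insert x (C.erase g)) := by
  obtain ⟨C, hCA, hmin⟩ :=
    exists_minimal_le_of_wellFoundedLT (fun C => x ∈ edgeClosure ends C) A h
  refine ⟨C, hCA, hmin.prop, fun g hg => ?_⟩
  refine mem_edgeClosure_insert (hmin.not_prop_of_lt (erase_ssubset hg)) ?_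
  rw [insert_erase hg]
  exact hmin.prop

lemma notMem_edgeClosure_erase_of_mem_circuit {A C : Finset E} {x g : E} (hA : EdgeIndep ends A)
    (hCA : C ⊆ A) (hC : ∀ g ∈ C, g ∈ edgeClosure ends (insert x (C.erase g))) (hg : g ∈ C) :
    x ∉ edgeClosure ends (A.erase g) := by
  intro hx
  refine hA g (hCA hg) (edgeClosure_subset_edgeClosure_of_subset_edgeClosure ?_ (hC g hg))
  rw [coe_insert, Set.insert_subset_iff]
  exact ⟨hx, (coe_subset.2 (erase_subset_erase g hCA)).trans (subset_edgeClosure _)⟩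

lemma exists_circuit_of_not_edgeIndep {A : Finset E} (hA : ¬ EdgeIndep ends A) :
    ∃ K ⊆ A, K.Nonempty ∧ ∀ g ∈ K, g ∈ edgeClosure ends (K.erase g) := by
  obtain ⟨e, he, hcl⟩ : ∃ e ∈ A, e ∈ edgeClosure ends (A.erase e) := by
    simpa [EdgeIndep] using hA
  obtain ⟨C, hCA, heC, hCcirc⟩ := exists_circuit_of_mem_edgeClosure hcl
  have heC' : e ∉ C := fun h => (mem_erase.1 (hCA h)).1 rfl
  refine ⟨insert e C, insert_subset he (hCA.trans (erase_subset e A)), insert_nonempty e C,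
    fun g hg => ?_⟩
  rcases mem_insert.1 hg with rfl | hgC
  · rwa [erase_insert heC']
  · rw [erase_insert_of_ne (ne_of_mem_of_not_mem hgC heC').symm]
    exact hCcirc g hgC

variable [Fintype V]

lemma card_le_card_add_kc (A : Finset E) : Fintype.card V ≤ #A + kc ends A := by
  induction A using Finset.induction_on with
  | empty => simp [kc_empty, Nat.card_eq_fintype_card]
  | @insert e A he ih =>
    rw [card_insert_of_notMem he]
    by_cases hcl : e ∈ edgeClosure ends A
    · rw [kc_insert_of_mem_edgeClosure hcl]
      omega
    · have := kc_insert_add_one_of_notMem_edgeClosure hcl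
      omega

lemma edgeIndep_iff_card_add_kc_eq {A : Finset E} :
    EdgeIndep ends A ↔ #A + kc ends A = Fintype.card V := by
  refine ⟨fun hA => ?_, fun h e he hcl => ?_⟩
  · induction A using Finset.induction_on with
    | empty => simp [kc_empty, Nat.card_eq_fintype_card]
    | @insert e A he ih =>
      have hcl := hA e (mem_insert_self e A)
      rw [erase_insert he] at hcl
      have := kc_insert_add_one_of_notMem_edgeClosure hcl
      have := ih (hA.subset (subset_insert e A))
      rw [card_insert_of_notMem he]
      omega
  · have hkc := kc_insert_of_mem_edgeClosure hcl
    rw [insert_erase he] at hkc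
    have := card_le_card_add_kc (ends := ends) (A.erase e)
    have := card_erase_add_one he
    omega

variable [Fintype E]

lemma isSpanningForest_iff {A : Finset E} :
    IsSpanningForest ends A ↔ EdgeIndep ends A ∧ ∀ e, e ∈ edgeClosure ends A := by
  rw [IsSpanningForest, edgeIndep_iff_card_add_kc_eq, forall_mem_edgeClosure_iff_kc_eq]

lemma isSpanningForest_swapEdge_iff {A : Finset E} {e f : E} (hA : IsSpanningForest ends A)
    (he : e ∈ A) (hf : f ∉ A) :
    IsSpanningForest ends (swapEdge A e f) ↔ f ∉ edgeClosure ends (A.erase e) := by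
  have hcard : #(swapEdge A e f) = #A := by
    rw [swapEdge, card_insert_of_notMem (fun h => hf (mem_of_mem_erase h)), card_erase_add_one he]
  -- `e` is a bridge of `A`, and the swap is a spanning forest iff `f` rejoins its two sides
  have hbridge : kc ends A + 1 = kc ends (A.erase e) := by
    have := kc_insert_add_one_of_notMem_edgeClosure ((isSpanningForest_iff.1 hA).1 e he)
    rwa [insert_erase he] at this
  obtain ⟨hforest, hspan⟩ := hA
  rw [IsSpanningForest, hcard, ← hspan]
  by_cases hcl : f ∈ edgeClosure ends (A.erase e)
  · have := kc_insert_of_mem_edgeClosure hcl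
    simp only [swapEdge, hcl, not_true_eq_false, iff_false]
    omega
  · have := kc_insert_add_one_of_notMem_edgeClosure hcl
    simp only [swapEdge, hcl, not_false_eq_true, iff_true]
    omega

end Forest

section Activity

variable {V E : Type} [Fintype V] [Fintype E] [DecidableEq E] [LinearOrder E]
  {ends : E → Sym2 V} {A : Finset E}

lemma internallyActive_iff (hA : IsSpanningForest ends A) {e : E} :
    InternallyActive ends A e ↔ e ∈ A ∧ ∀ f ∉ A, e < f → f ∈ edgeClosure ends (A.erase e) := by
  refine and_congr_right fun he => ?_
  simp only [not_exists, not_and]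
  refine forall_congr' fun f => imp_congr_right fun hf => imp_congr_right fun _ => ?_
  rw [isSpanningForest_swapEdge_iff hA he hf, not_not]

lemma externallyActive_iff (hA : IsSpanningForest ends A) {f : E} :
    ExternallyActive ends A f ↔ f ∉ A ∧ ∀ e ∈ A, f < e → f ∈ edgeClosure ends (A.erase e) := by
  refine and_congr_right fun hf => ?_
  simp only [not_exists, not_and]
  refine forall_congr' fun e => imp_congr_right fun he => imp_congr_right fun _ => ?_
  rw [isSpanningForest_swapEdge_iff hA he hf, not_not]

lemma intAct_subset : intAct ends A ⊆ A :=
  fun _ he => (mem_filter.1 he).2.1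

lemma disjoint_extAct : Disjoint (extAct ends A) A :=
  disjoint_left.2 fun _ hf => (mem_filter.1 hf).2.1

end Activity

noncomputable def greedyContext {E : Type} [DecidableEq E] [LinearOrder E]
    (A S : Finset E) (e : E) : Finset E :=
  A.filter (e < ·) ∪ S.filter (· < e)

/-- Crapo's forest of `S`: deciding the edges from the largest down, `e` is kept iff it is not
spanned by the kept edges above it together with the edges of `S` below it. -/
def IsGreedyForest {V E : Type} [DecidableEq E] [LinearOrder E] (ends : E → Sym2 V)
    (S A : Finset E) : Prop :=
  ∀ e, e ∈ A ↔ e ∉ edgeClosure ends (greedyContext A S e)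

/-- The pairs `a ∈ A`, `b ∉ A` on which the activity of `A \ S` (if `a < b`) or of `S \ A`
(if `b < a`) depends. -/
def IsActivityPair {E : Type} [LinearOrder E] (S A : Finset E) (a b : E) : Prop :=
  a ∈ A ∧ b ∉ A ∧ (a < b ∧ a ∉ S ∨ b < a ∧ b ∈ S)

section Greedy

variable {V E : Type} [DecidableEq E] [LinearOrder E] {ends : E → Sym2 V} {S A : Finset E}

lemma IsGreedyForest.eq [Finite E] {A' : Finset E} (h : IsGreedyForest ends S A)
    (h' : IsGreedyForest ends S A') : A = A' := by
  ext e
  induction e using WellFoundedGT.induction with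
  | _ e ih =>
    have hAbove : A.filter (e < ·) = A'.filter (e < ·) :=
      ext fun f => by simpa only [mem_filter] using and_congr_left (ih f)
    rw [h e, h' e, greedyContext, greedyContext, hAbove]

lemma exists_isGreedyForest [Fintype E] (ends : E → Sym2 V) (S : Finset E) :
    ∃ A, IsGreedyForest ends S A := by
  let keep : E → Prop := (wellFounded_gt (α := E)).fix fun e keepAbove =>
    e ∉ edgeClosure ends ((univ.filter fun f => ∃ h : e < f, keepAbove f h) ∪ S.filter (· < e))
  refine ⟨univ.filter keep, fun e => ?_⟩
  rw [mem_filter, and_iff_right (mem_univ e)]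
  conv_lhs => rw [show keep e = _ from WellFounded.fix_eq _ _ _]
  congr! 3
  ext f
  simp only [greedyContext, mem_union, mem_filter, mem_univ, true_and, exists_prop]
  exact or_congr_left and_comm

lemma IsGreedyForest.edgeIndep (h : IsGreedyForest ends S A) : EdgeIndep ends A := by
  by_contra hA
  obtain ⟨K, hKA, hK, hKcirc⟩ := exists_circuit_of_not_edgeIndep hA
  have hm := K.min'_mem hK
  refine (h _).1 (hKA hm) (edgeClosure_mono (fun g hg => ?_) (hKcirc _ hm))
  obtain ⟨hgm, hgK⟩ := mem_erase.1 hg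
  exact mem_union_left _ (mem_filter.2 ⟨hKA hgK, (K.min'_le g hgK).lt_of_ne' hgm⟩)

lemma IsGreedyForest.mem_edgeClosure [Finite E] (h : IsGreedyForest ends S A) (x : E) :
    x ∈ edgeClosure ends A := by
  induction x using WellFoundedLT.induction with
  | _ x ih =>
    by_cases hx : x ∈ A
    · exact subset_edgeClosure A hx
    refine edgeClosure_subset_edgeClosure_of_subset_edgeClosure (fun g hg => ?_)
      (not_not.1 (mt (h x).2 hx))
    rcases mem_union.1 (mem_coe.1 hg) with hg | hg
    · exact subset_edgeClosure A (mem_filter.1 hg).1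
    · exact ih g (mem_filter.1 hg).2

lemma IsGreedyForest.isSpanningForest [Fintype V] [Fintype E] (h : IsGreedyForest ends S A) :
    IsSpanningForest ends A :=
  isSpanningForest_iff.2 ⟨h.edgeIndep, h.mem_edgeClosure⟩

lemma IsGreedyForest.mem_edgeClosure_erase_of_lt (h : IsGreedyForest ends S A) {a b : E}
    (ih : ∀ a' b', max a' b' < b → IsActivityPair S A a' b' →
      b' ∈ edgeClosure ends (A.erase a'))
    (ha : a ∈ A) (hb : b ∉ A) (hab : a < b) (haS : a ∉ S) :
    b ∈ edgeClosure ends (A.erase a) := by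
  refine edgeClosure_subset_edgeClosure_of_subset_edgeClosure (fun g hg => ?_)
    (not_not.1 (mt (h b).2 hb))
  rcases mem_union.1 (mem_coe.1 hg) with hg | hg
  · obtain ⟨hgA, hbg⟩ := mem_filter.1 hg
    exact subset_edgeClosure _ (mem_erase.2 ⟨(hab.trans hbg).ne', hgA⟩)
  obtain ⟨hgS, hgb⟩ := mem_filter.1 hg
  by_cases hgA : g ∈ A
  · exact subset_edgeClosure _ (mem_erase.2 ⟨ne_of_mem_of_not_mem hgS haS, hgA⟩)
  refine ih a g (max_lt hab hgb) ⟨ha, hgA, ?_⟩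
  rcases (ne_of_mem_of_not_mem ha hgA).lt_or_gt with hag | hga
  exacts [.inl ⟨hag, haS⟩, .inr ⟨hga, hgS⟩]

lemma IsGreedyForest.mem_edgeClosure_erase_of_gt [Finite E] (h : IsGreedyForest ends S A)
    {a b : E} (ih : ∀ a' b', max a' b' < a → IsActivityPair S A a' b' →
      b' ∈ edgeClosure ends (A.erase a'))
    (ha : a ∈ A) (hb : b ∉ A) (hba : b < a) (hbS : b ∈ S) :
    b ∈ edgeClosure ends (A.erase a) := by
  by_contra hbcl
  obtain ⟨C, hCA, hbC, hCcirc⟩ := exists_circuit_of_mem_edgeClosure (h.mem_edgeClosure b)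
  have haC : a ∈ C := by
    by_contra haC
    exact hbcl (edgeClosure_mono (fun g hg => mem_erase.2 ⟨ne_of_mem_of_not_mem hg haC, hCA hg⟩)
      hbC)
  -- the circuit of `b` through `a` lies in the greedy context of `a`, contradicting `a ∈ A`
  refine (h a).1 ha (edgeClosure_mono (insert_subset ?_ fun g hg => ?_) (hCcirc a haC))
  · exact mem_union_right _ (mem_filter.2 ⟨hbS, hba⟩)
  obtain ⟨hga, hgC⟩ := mem_erase.1 hg
  have hgA := hCA hgC
  rcases hga.lt_or_gt with hga | hag
  · refine mem_union_right _ (mem_filter.2 ⟨by_contra fun hgS => ?_, hga⟩)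
    refine notMem_edgeClosure_erase_of_mem_circuit h.edgeIndep hCA hCcirc hgC
      (ih g b (max_lt hga hba) ⟨hgA, hb, ?_⟩)
    rcases (ne_of_mem_of_not_mem hgA hb).lt_or_gt with hgb | hbg
    exacts [.inl ⟨hgb, hgS⟩, .inr ⟨hbg, hbS⟩]
  · exact mem_union_left _ (mem_filter.2 ⟨hgA, hag⟩)

lemma IsGreedyForest.mem_edgeClosure_erase [Finite E] (h : IsGreedyForest ends S A) {a b : E}
    (hab : IsActivityPair S A a b) : b ∈ edgeClosure ends (A.erase a) := by
  suffices ∀ m a b, max a b ≤ m → IsActivityPair S A a b → b ∈ edgeClosure ends (A.erase a) from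
    this _ a b le_rfl hab
  intro m
  induction m using WellFoundedLT.induction with
  | _ m ih =>
    rintro a b hm ⟨ha, hb, ⟨hab, haS⟩ | ⟨hba, hbS⟩⟩
    · exact h.mem_edgeClosure_erase_of_lt (fun a' b' hlt =>
        ih _ (hlt.trans_le ((le_max_right a b).trans hm)) a' b' le_rfl) ha hb hab haS
    · exact h.mem_edgeClosure_erase_of_gt (fun a' b' hlt =>
        ih _ (hlt.trans_le ((le_max_left a b).trans hm)) a' b' le_rfl) ha hb hba hbS

variable [Fintype V] [Fintype E]

lemma IsGreedyForest.sdiff_subset_intAct (h : IsGreedyForest ends S A) :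
    A \ S ⊆ intAct ends A := by
  intro e he
  obtain ⟨heA, heS⟩ := mem_sdiff.1 he
  refine mem_filter.2 ⟨mem_univ e, (internallyActive_iff h.isSpanningForest).2 ⟨heA, ?_⟩⟩
  exact fun f hf hef => h.mem_edgeClosure_erase ⟨heA, hf, .inl ⟨hef, heS⟩⟩

lemma IsGreedyForest.sdiff_subset_extAct (h : IsGreedyForest ends S A) :
    S \ A ⊆ extAct ends A := by
  intro f hf
  obtain ⟨hfS, hfA⟩ := mem_sdiff.1 hf
  refine mem_filter.2 ⟨mem_univ f, (externallyActive_iff h.isSpanningForest).2 ⟨hfA, ?_⟩⟩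
  exact fun e he hfe => h.mem_edgeClosure_erase ⟨he, hfA, .inr ⟨hfe, hfS⟩⟩

lemma isGreedyForest_sdiff_union {I X : Finset E} (hA : IsSpanningForest ends A)
    (hI : I ⊆ intAct ends A) (hX : X ⊆ extAct ends A) : IsGreedyForest ends (A \ I ∪ X) A := by
  obtain ⟨hindep, hspan⟩ := isSpanningForest_iff.1 hA
  intro e
  refine ⟨fun he hcl => hindep e he (edgeClosure_subset_edgeClosure_of_subset_edgeClosure
    (fun g hg => ?_) hcl), fun hcl => by_contra fun heA => ?_⟩
  · rcases mem_union.1 (mem_coe.1 hg) with hg | hg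
    · obtain ⟨hgA, heg⟩ := mem_filter.1 hg
      exact subset_edgeClosure _ (mem_erase.2 ⟨heg.ne', hgA⟩)
    obtain ⟨hgS, hge⟩ := mem_filter.1 hg
    by_cases hgA : g ∈ A
    · exact subset_edgeClosure _ (mem_erase.2 ⟨hge.ne, hgA⟩)
    have hgX : g ∈ X := (mem_union.1 hgS).resolve_left fun h => hgA (mem_sdiff.1 h).1
    exact ((externallyActive_iff hA).1 (mem_filter.1 (hX hgX)).2).2 e he hge
  · obtain ⟨C, hCA, heC, hCcirc⟩ := exists_circuit_of_mem_edgeClosure (hspan e)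
    refine hcl (edgeClosure_mono (fun g hgC => ?_) heC)
    have hgA := hCA hgC
    rcases (ne_of_mem_of_not_mem hgA heA).lt_or_gt with hge | heg
    · refine mem_union_right _ (mem_filter.2 ⟨by_contra fun hgS => ?_, hge⟩)
      have hgI : g ∈ I := by_contra fun hgI => hgS (mem_union_left _ (mem_sdiff.2 ⟨hgA, hgI⟩))
      exact notMem_edgeClosure_erase_of_mem_circuit hindep hCA hCcirc hgC
        (((internallyActive_iff hA).1 (mem_filter.1 (hI hgI)).2).2 e heA hge)
    · exact mem_union_left _ (mem_filter.2 ⟨hgA, heg⟩)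

end Greedy

lemma Finset.sdiff_sdiff_union_of_disjoint {E : Type} [DecidableEq E] {A I X : Finset E}
    (hI : I ⊆ A) (hX : Disjoint X A) : A \ (A \ I ∪ X) = I := by
  grind [disjoint_left]

lemma Finset.sdiff_union_sdiff_of_disjoint {E : Type} [DecidableEq E] {A I X : Finset E}
    (hX : Disjoint X A) : (A \ I ∪ X) \ A = X := by
  grind [disjoint_left]

/-- The map `(F, A_i, A_e) ↦ (A_f \ A_i) ∪ A_e` is a bijection
from the set of triples (spanning forest, subset of its internally active edges,
subset of its externally active edges) onto the power set `2^E`. -/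
theorem activity_map_bijective {V E : Type} [Fintype V] [Fintype E] [DecidableEq E]
    [LinearOrder E] (ends : E → Sym2 V) :
    Function.Bijective
      (fun t : {t : Finset E × Finset E × Finset E //
          IsSpanningForest ends t.1 ∧ t.2.1 ⊆ intAct ends t.1 ∧ t.2.2 ⊆ extAct ends t.1} =>
        (t.val.1 \ t.val.2.1) ∪ t.val.2.2) := by
  refine ⟨?_, fun S => ?_⟩
  · rintro ⟨⟨A, I, X⟩, hA, hI, hX⟩ ⟨⟨A', I', X'⟩, hA', hI', hX'⟩ hS
    dsimp only at hS
    obtain rfl : A = A' := (isGreedyForest_sdiff_union hA hI hX).eq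
      (hS ▸ isGreedyForest_sdiff_union hA' hI' hX')
    have hIA : I ⊆ A := hI.trans intAct_subset
    have hIA' : I' ⊆ A := hI'.trans intAct_subset
    have hXA : Disjoint X A := disjoint_of_subset_left hX disjoint_extAct
    have hXA' : Disjoint X' A := disjoint_of_subset_left hX' disjoint_extAct
    simp only [Subtype.mk.injEq, Prod.mk.injEq, true_and]
    constructor
    · rw [← sdiff_sdiff_union_of_disjoint hIA hXA, hS, sdiff_sdiff_union_of_disjoint hIA' hXA']
    · rw [← sdiff_union_sdiff_of_disjoint (I := I) hXA, hS, sdiff_union_sdiff_of_disjoint hXA']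
  · obtain ⟨A, hA⟩ := exists_isGreedyForest ends S
    refine ⟨⟨(A, A \ S, S \ A), hA.isSpanningForest, hA.sdiff_subset_intAct,
      hA.sdiff_subset_extAct⟩, ?_⟩
    dsimp only
    grind
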